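/- For every finite simple graph G, the following three assertions are equivalent: (i) every connected induced subgraph H of G with at least one edge satisfies τ_c(H) = τ(H); (ii) G contains no induced subgraph isomorphic to P_5, C_5, or C_4; (iii) G is chordal and contains no induced subgraph isomorphic to P_5. -/

import Mathlib

open SimpleGraph

/-- `C` is a vertex cover of `G`: every edge of `G` has an endpoint in `C`. -/
def IsVertexCover {V : Type} (G : SimpleGraph V) (C : Set V) : Prop :=
  ∀ ⦃u v : V⦄, G.Adj u v → u ∈ C ∨ v ∈ C

/-- `C` is a connected vertex cover of `G`: a vertex cover inducing a connected subgraph. -/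
def IsConnectedVertexCover {V : Type} (G : SimpleGraph V) (C : Set V) : Prop :=
  _root_.IsVertexCover G C ∧ (G.induce C).Connected

/-- The vertex cover number `τ(G)`. -/
noncomputable def tau {V : Type} (G : SimpleGraph V) : ℕ :=
  sInf {n | ∃ C : Set V, _root_.IsVertexCover G C ∧ C.ncard = n}

/-- The connected vertex cover number `τ_c(G)`. -/
noncomputable def tauc {V : Type} (G : SimpleGraph V) : ℕ :=
  sInf {n | ∃ C : Set V, IsConnectedVertexCover G C ∧ C.ncard = n}

/-- `G` is `H`-free: `G` has no induced subgraph isomorphic to `H`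
(equivalently, there is no graph embedding of `H` into `G`). -/
def HFree {W V : Type} (H : SimpleGraph W) (G : SimpleGraph V) : Prop :=
  IsEmpty (H ↪g G)

/-- `G` is chordal: it contains no induced cycle of length at least 4. -/
def Chordal {V : Type} (G : SimpleGraph V) : Prop :=
  ∀ k : ℕ, 4 ≤ k → HFree (SimpleGraph.cycleGraph k) G

/-!
Let `H` be connected and `(P₅, C₅, C₄)`-free, and among its minimum vertex covers take one, `C`,
spanning as many edges as possible. If `H[C]` were disconnected, then, `V \ C` being independent,
some `x ∉ C` would join a component `A` of `H[C]` at `a` to another one at `b`. Swapping `a` and `x`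
gives another minimum cover, spanning strictly more edges as soon as every neighbour of `a` other
than `x` lies in `C` and is adjacent to `x`. Hence `a` has a neighbour `z` adjacent to neither `x`
nor `b` (if `z ∈ C` it lies in `A`; if `z ∉ C`, adjacency to `b` would make `a x b z` an induced
`C₄`). Symmetrically `b` has such a neighbour `w`, and `z a x b w` is an induced `P₅` or `C₅`.
Conversely `P₅`, `C₅` and `C₄` have `τ_c > τ`, and every longer cycle contains an induced `P₅`.
-/

section

variable {V W : Type} {G : SimpleGraph V} {G' : SimpleGraph W}

/- `IsVertexCover` unfolds to Mathlib's `SimpleGraph.IsVertexCover`, whose API is used below. -/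

theorem exists_isVertexCover_ncard_eq_tau (G : SimpleGraph V) :
    ∃ C, _root_.IsVertexCover G C ∧ C.ncard = tau G :=
  Nat.sInf_mem (s := {n | ∃ C : Set V, _root_.IsVertexCover G C ∧ C.ncard = n})
    ⟨_, Set.univ, isVertexCover_univ, rfl⟩

theorem tau_le_ncard {C : Set V} (hC : _root_.IsVertexCover G C) : tau G ≤ C.ncard :=
  Nat.sInf_le ⟨C, hC, rfl⟩

theorem exists_isConnectedVertexCover_ncard_eq_tauc (h : ∃ C, IsConnectedVertexCover G C) :
    ∃ C, IsConnectedVertexCover G C ∧ C.ncard = tauc G :=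
  Nat.sInf_mem (s := {n | ∃ C : Set V, IsConnectedVertexCover G C ∧ C.ncard = n})
    (let ⟨C, hC⟩ := h; ⟨_, C, hC, rfl⟩)

theorem tauc_le_ncard {C : Set V} (hC : IsConnectedVertexCover G C) : tauc G ≤ C.ncard :=
  Nat.sInf_le ⟨C, hC, rfl⟩

theorem tau_le_tauc (h : ∃ C, IsConnectedVertexCover G C) : tau G ≤ tauc G := by
  obtain ⟨C, hC, hcard⟩ := exists_isConnectedVertexCover_ncard_eq_tauc h
  exact hcard ▸ tau_le_ncard hC.1

theorem isConnectedVertexCover_univ (hG : G.Connected) : IsConnectedVertexCover G Set.univ :=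
  ⟨isVertexCover_univ, G.induceUnivIso.symm.connected_iff.1 hG⟩

theorem IsConnectedVertexCover.image (e : G ≃g G') {C : Set V}
    (hC : IsConnectedVertexCover G C) : IsConnectedVertexCover G' (e '' C) :=
  ⟨(isVertexCover_image_iso e).2 hC.1,
    (e.induce e.injective.injOn.bijOn_image).connected_iff.1 hC.2⟩

theorem tau_congr (e : G ≃g G') : tau G = tau G' := by
  unfold tau
  congr 1
  ext n
  constructor
  · rintro ⟨C, hC, rfl⟩
    exact ⟨e '' C, (isVertexCover_image_iso e).2 hC, Set.ncard_image_of_injective C e.injective⟩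
  · rintro ⟨C, hC, rfl⟩
    exact ⟨e.symm '' C, (isVertexCover_image_iso e.symm).2 hC,
      Set.ncard_image_of_injective C e.symm.injective⟩

theorem tauc_congr (e : G ≃g G') : tauc G = tauc G' := by
  unfold tauc
  congr 1
  ext n
  constructor
  · rintro ⟨C, hC, rfl⟩
    exact ⟨e '' C, hC.image e, Set.ncard_image_of_injective C e.injective⟩
  · rintro ⟨C, hC, rfl⟩
    exact ⟨e.symm '' C, hC.image e.symm, Set.ncard_image_of_injective C e.symm.injective⟩

/- The hypotheses quantify over finsets so that `decide` can check them for small graphs. -/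
theorem tau_lt_tauc_of_isolated_in_small_covers [Fintype W] {K : SimpleGraph W} (hK : K.Connected)
    {k : ℕ} (hcover : ∃ C : Finset W, C.card ≤ k ∧ ∀ u v, K.Adj u v → u ∈ C ∨ v ∈ C)
    (hsmall : ∀ C : Finset W, C.card ≤ k → (∀ u v, K.Adj u v → u ∈ C ∨ v ∈ C) →
      ∃ v ∈ C, ∃ w ∈ C, v ≠ w ∧ ∀ u ∈ C, ¬ K.Adj v u) :
    tau K < tauc K := by
  classical
  obtain ⟨C₀, hC₀, hcover₀⟩ := hcover
  have htau : tau K ≤ k := (tau_le_ncard (C := C₀) fun u v huv => hcover₀ u v huv).trans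
    ((Set.ncard_coe_finset C₀).trans_le hC₀)
  obtain ⟨C, ⟨hcov, hconn⟩, hcard⟩ :=
    exists_isConnectedVertexCover_ncard_eq_tauc ⟨_, isConnectedVertexCover_univ hK⟩
  refine htau.trans_lt (lt_of_not_ge fun hle => ?_)
  obtain ⟨v, hv, w, hw, hvw, hiso⟩ := hsmall C.toFinset
    (by rwa [← Set.ncard_eq_toFinset_card', hcard])
    (fun u v huv => by simpa using hcov huv)
  rw [Set.mem_toFinset] at hv hw
  have : Nontrivial C := Set.nontrivial_coe_sort.2 ⟨v, hv, w, hw, hvw⟩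
  obtain ⟨⟨u, hu⟩, hvu⟩ := hconn.preconnected.exists_adj_of_nontrivial ⟨v, hv⟩
  exact hiso u (Set.mem_toFinset.2 hu) hvu

theorem tau_lt_tauc_pathGraph_five : tau (pathGraph 5) < tauc (pathGraph 5) :=
  tau_lt_tauc_of_isolated_in_small_covers (pathGraph_connected 4) (k := 2)
    (by simp only [pathGraph_adj]; decide) (by simp only [pathGraph_adj]; decide)

theorem tau_lt_tauc_cycleGraph_five : tau (cycleGraph 5) < tauc (cycleGraph 5) :=
  tau_lt_tauc_of_isolated_in_small_covers cycleGraph_connected (k := 3) (by decide) (by decide)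

theorem tau_lt_tauc_cycleGraph_four : tau (cycleGraph 4) < tauc (cycleGraph 4) :=
  tau_lt_tauc_of_isolated_in_small_covers cycleGraph_connected (k := 2) (by decide) (by decide)

theorem hfree_of_tau_lt_tauc {K : SimpleGraph W} (hK : K.Connected) (hKe : K.edgeSet.Nonempty)
    (hlt : tau K < tauc K)
    (hG : ∀ S : Set V, (G.induce S).Connected → (G.induce S).edgeSet.Nonempty →
      tauc (G.induce S) = tau (G.induce S)) :
    HFree K G := by
  refine ⟨fun f => ?_⟩
  let e := f.isoInduceRange
  obtain ⟨d, hd⟩ := hKe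
  have := hG _ (e.connected_iff.1 hK) ⟨_, (e.mapEdgeSet ⟨d, hd⟩).2⟩
  rw [← tauc_congr e, ← tau_congr e] at this
  omega

theorem HFree.of_embedding {K : SimpleGraph W} {U : Type} {M : SimpleGraph U}
    (e : K ↪g M) (h : HFree K G) : HFree M G :=
  ⟨fun f => h.false (f.comp e)⟩

def pathGraphFiveEmbeddingCycleGraph (m : ℕ) : pathGraph 5 ↪g cycleGraph (m + 6) where
  toFun := Fin.castLE (by omega)
  inj' := Fin.castLE_injective _
  map_rel_iff' {i j} := by
    simp only [Function.Embedding.coeFn_mk]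
    rw [cycleGraph_adj, pathGraph_adj, sub_eq_iff_eq_add', sub_eq_iff_eq_add', Fin.ext_iff,
      Fin.ext_iff, Fin.val_add_one_of_lt, Fin.val_add_one_of_lt]
    · simp only [Fin.val_castLE]
      omega
    all_goals simp only [Fin.lt_def, Fin.val_castLE, Fin.val_last]; omega

theorem chordal_iff_of_hfree_pathGraph (h5 : HFree (pathGraph 5) G) :
    Chordal G ↔ HFree (cycleGraph 5) G ∧ HFree (cycleGraph 4) G := by
  refine ⟨fun h => ⟨h 5 (by norm_num), h 4 le_rfl⟩, fun ⟨hc5, hc4⟩ k hk => ?_⟩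
  obtain rfl | rfl | ⟨m, rfl⟩ : k = 4 ∨ k = 5 ∨ ∃ m, k = m + 6 := by
    rcases Nat.lt_or_ge k 6 with h | h
    · omega
    · exact Or.inr (Or.inr ⟨k - 6, by omega⟩)
  exacts [hc4, hc5, h5.of_embedding (pathGraphFiveEmbeddingCycleGraph m)]

section InducedSubgraphs

variable {H : SimpleGraph V}

theorem HFree.induce {K : SimpleGraph W} (h : HFree K H) (S : Set V) : HFree K (H.induce S) :=
  ⟨fun f => h.false ((Embedding.induce S).comp f)⟩

theorem nonempty_pathGraph_five_or_cycleGraph_five_embedding {z a x b w : V}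
    (haz : H.Adj a z) (hax : H.Adj a x) (hxb : H.Adj x b) (hbw : H.Adj b w)
    (hxz : ¬ H.Adj x z) (hbz : ¬ H.Adj b z) (hab : ¬ H.Adj a b) (haw : ¬ H.Adj a w)
    (hxw : ¬ H.Adj x w) :
    Nonempty (pathGraph 5 ↪g H) ∨ Nonempty (cycleGraph 5 ↪g H) := by
  have hinj : Function.Injective ![z, a, x, b, w] := by
    simp [Function.Injective, Fin.forall_fin_succ]
    and_intros <;> rintro rfl <;> simp_all [adj_comm]
  by_cases hzw : H.Adj z w
  · refine .inr ⟨⟨⟨_, hinj⟩, fun {i j} => ?_⟩⟩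
    simp only [Function.Embedding.coeFn_mk]
    revert i j
    simp [Fin.forall_fin_succ, cycleGraph_adj]
    grind [H.adj_symm]
  · refine .inl ⟨⟨⟨_, hinj⟩, fun {i j} => ?_⟩⟩
    simp only [Function.Embedding.coeFn_mk]
    revert i j
    simp [Fin.forall_fin_succ, pathGraph_adj]
    grind [H.adj_symm]

theorem nonempty_cycleGraph_four_embedding {a x b y : V}
    (hax : H.Adj a x) (hxb : H.Adj x b) (hby : H.Adj b y) (hya : H.Adj y a)
    (hab : ¬ H.Adj a b) (hxy : ¬ H.Adj x y) (hab' : a ≠ b) (hxy' : x ≠ y) :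
    Nonempty (cycleGraph 4 ↪g H) := by
  have hinj : Function.Injective ![a, x, b, y] := by
    simp [Function.Injective, Fin.forall_fin_succ]
    and_intros <;> rintro rfl <;> simp_all [adj_comm]
  refine ⟨⟨⟨_, hinj⟩, fun {i j} => ?_⟩⟩
  simp only [Function.Embedding.coeFn_mk]
  revert i j
  simp [Fin.forall_fin_succ, cycleGraph_adj]
  grind [H.adj_symm]

end InducedSubgraphs

section Swap

variable [DecidableEq V] {H : SimpleGraph V} {C : Set V} {a x : V}

def adjPairsWithin (H : SimpleGraph V) (C : Set V) : Set (V × V) :=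
  {p | p.1 ∈ C ∧ p.2 ∈ C ∧ H.Adj p.1 p.2}

theorem isVertexCover_preimage_swap (hC : _root_.IsVertexCover H C) (ha : a ∈ C) (hx : x ∉ C)
    (hN : ∀ y, H.Adj a y → y ≠ x → y ∈ C ∧ H.Adj x y) :
    _root_.IsVertexCover H (Equiv.swap a x ⁻¹' C) := by
  have hmem : ∀ w, w ≠ a → w ∈ C ∨ w = x → Equiv.swap a x w ∈ C := by
    rintro w hwa (hw | rfl)
    · rwa [Equiv.swap_apply_of_ne_of_ne hwa (ne_of_mem_of_not_mem hw hx)]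
    · rwa [Equiv.swap_apply_right]
  have hnbr : ∀ w, H.Adj a w → w ∈ C ∨ w = x := fun w haw =>
    (em (w = x)).elim .inr fun hwx => .inl (hN w haw hwx).1
  intro u v huv
  by_cases hu : u = a
  · subst hu
    exact .inr (hmem v huv.ne' (hnbr v huv))
  by_cases hv : v = a
  · subst hv
    exact .inl (hmem u huv.ne (hnbr u huv.symm))
  exact (hC huv).imp (fun h => hmem u hu (.inl h)) (fun h => hmem v hv (.inl h))

theorem ncard_adjPairsWithin_lt_swap [Finite V] (ha : a ∈ C) (hx : x ∉ C) {b : V} (hb : b ∈ C)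
    (hxb : H.Adj x b) (hne : a ≠ b) (hab : ¬ H.Adj a b)
    (hN : ∀ y, H.Adj a y → y ≠ x → y ∈ C ∧ H.Adj x y) :
    (adjPairsWithin H C).ncard < (adjPairsWithin H (Equiv.swap a x ⁻¹' C)).ncard := by
  set σ := Equiv.swap a x
  have hfix : ∀ w ∈ C, w ≠ a → σ w = w := fun w hw hwa =>
    Equiv.swap_apply_of_ne_of_ne hwa (ne_of_mem_of_not_mem hw hx)
  have hσ : ∀ u ∈ C, ∀ v ∈ C, H.Adj u v → H.Adj (σ u) (σ v) := by
    intro u hu v hv huv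
    by_cases hua : u = a
    · subst hua
      rw [Equiv.swap_apply_left, hfix v hv huv.ne']
      exact (hN v huv (ne_of_mem_of_not_mem hv hx)).2
    by_cases hva : v = a
    · subst hva
      rw [Equiv.swap_apply_left, hfix u hu huv.ne]
      exact (hN u huv.symm (ne_of_mem_of_not_mem hu hx)).2.symm
    rwa [hfix u hu hua, hfix v hv hva]
  rw [← Set.ncard_preimage_of_injective_subset_range (s := adjPairsWithin H (σ ⁻¹' C))
    (σ.prodCongr σ).injective (by simp)]
  refine Set.ncard_lt_ncard ⟨fun p ⟨hp₁, hp₂, hp⟩ => ?_, fun h => ?_⟩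
  · simpa [adjPairsWithin, σ, hp₁, hp₂] using hσ _ hp₁ _ hp₂ hp
  · refine hab (h (a := (a, b)) ?_).2.2
    simpa [adjPairsWithin, σ, ha, hb, hfix b hb hne.symm] using hxb

end Swap

section Components

variable {H : SimpleGraph V} {C A : Set V}

/-- `A` is a union of connected components of `H[C]`. -/
def IsClosedIn (H : SimpleGraph V) (C A : Set V) : Prop :=
  A ⊆ C ∧ ∀ ⦃u v⦄, u ∈ A → v ∈ C → H.Adj u v → v ∈ A

theorem IsClosedIn.diff (hA : IsClosedIn H C A) : IsClosedIn H C (C \ A) :=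
  ⟨Set.sdiff_subset, fun _ _ hu hv huv => ⟨hv, fun hvA => hu.2 (hA.2 hvA hu.1 huv.symm)⟩⟩

theorem exists_isClosedIn_of_not_connected (hC : C.Nonempty) (h : ¬ (H.induce C).Connected) :
    ∃ A, IsClosedIn H C A ∧ A.Nonempty ∧ (C \ A).Nonempty := by
  have : ¬ (H.induce C).Preconnected := fun hp => h (connected_iff _ |>.2 ⟨hp, hC.to_subtype⟩)
  obtain ⟨s, t, hst⟩ : ∃ s t, ¬ (H.induce C).Reachable s t := by simpa [Preconnected] using this
  refine ⟨{v | ∃ hv : v ∈ C, (H.induce C).Reachable s ⟨v, hv⟩}, ⟨fun v ⟨hv, _⟩ => hv, ?_⟩,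
    ⟨s, s.2, .rfl⟩, ⟨t, t.2, fun ⟨_, h⟩ => hst h⟩⟩
  rintro u v ⟨hu, hsu⟩ hv huv
  exact ⟨hv, hsu.trans (Adj.reachable (G := H.induce C) huv)⟩

theorem IsClosedIn.exists_adj_adj (hH : H.Connected) (hC : _root_.IsVertexCover H C)
    (hA : IsClosedIn H C A) {a₀ b₀ : V} (ha₀ : a₀ ∈ A) (hb₀ : b₀ ∈ C \ A) :
    ∃ a ∈ A, ∃ x ∉ C, ∃ b ∈ C \ A, H.Adj a x ∧ H.Adj x b := by
  let S := {v | v ∈ A ∨ (v ∉ C ∧ ∃ a ∈ A, H.Adj a v)}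
  obtain ⟨d, -, hd₁, hd₂⟩ := (hH.preconnected a₀ b₀).some.exists_boundary_dart S (.inl ha₀)
    (by rintro (h | ⟨h, -⟩); exacts [hb₀.2 h, h hb₀.1])
  simp only [S, Set.mem_ofPred_eq, not_or, not_and, not_exists] at hd₁ hd₂
  rcases hd₁ with hu | ⟨hu, a, ha, hau⟩
  · by_cases hv : d.snd ∈ C
    · exact absurd (hA.2 hu hv d.adj) hd₂.1
    · exact absurd d.adj (hd₂.2 hv d.fst hu)
  · exact ⟨a, ha, d.fst, hu, d.snd, ⟨(hC d.adj).resolve_left hu, hd₂.1⟩, hau, d.adj⟩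

end Components

section Structure

variable [Finite V] {H : SimpleGraph V} {C A : Set V}

theorem exists_adj_not_adj_of_maximal (hc4 : HFree (cycleGraph 4) H)
    (hC : _root_.IsVertexCover H C)
    (hmax : ∀ D, _root_.IsVertexCover H D → D.ncard = C.ncard →
      (adjPairsWithin H D).ncard ≤ (adjPairsWithin H C).ncard)
    (hA : IsClosedIn H C A) {a x b : V} (ha : a ∈ A) (hx : x ∉ C) (hb : b ∈ C \ A)
    (hax : H.Adj a x) (hxb : H.Adj x b) :
    ∃ z, H.Adj a z ∧ ¬ H.Adj x z ∧ ¬ H.Adj b z := by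
  classical
  have hne : a ≠ b := ne_of_mem_of_not_mem ha hb.2
  have hab : ¬ H.Adj a b := fun h => hb.2 (hA.2 ha hb.1 h)
  by_contra! hz
  have hN : ∀ y, H.Adj a y → y ≠ x → y ∈ C ∧ H.Adj x y := by
    intro y hay hyx
    by_cases hy : y ∈ C
    · exact ⟨hy, by_contra fun hxy => hb.2 (hA.2 (hA.2 ha hy hay) hb.1 (hz y hay hxy).symm)⟩
    · have hxy : ¬ H.Adj x y := fun h => (hC h).elim hx hy
      exact (hc4.false (nonempty_cycleGraph_four_embedding hax hxb (hz y hay hxy) hay.symm hab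
        hxy hne hyx.symm).some).elim
  have hswap := hmax _ (isVertexCover_preimage_swap hC (hA.1 ha) hx hN)
    (Set.ncard_preimage_of_injective_subset_range (Equiv.injective _) (by simp))
  exact hswap.not_gt (ncard_adjPairsWithin_lt_swap (hA.1 ha) hx hb.1 hxb hne hab hN)

theorem exists_isConnectedVertexCover_ncard_eq_tau (hH : H.Connected) (hE : H.edgeSet.Nonempty)
    (h5 : HFree (pathGraph 5) H) (hc5 : HFree (cycleGraph 5) H)
    (hc4 : HFree (cycleGraph 4) H) :
    ∃ C, IsConnectedVertexCover H C ∧ C.ncard = tau H := by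
  obtain ⟨C, ⟨hC, hCτ⟩, hmax⟩ := Set.exists_max_image
    {C : Set V | _root_.IsVertexCover H C ∧ C.ncard = tau H} (fun C => (adjPairsWithin H C).ncard)
    (Set.toFinite _) (exists_isVertexCover_ncard_eq_tau H)
  replace hmax : ∀ D, _root_.IsVertexCover H D → D.ncard = C.ncard →
      (adjPairsWithin H D).ncard ≤ (adjPairsWithin H C).ncard :=
    fun D hD hDC => hmax D ⟨hD, hDC.trans hCτ⟩
  refine ⟨C, ⟨hC, by_contra fun hconn => ?_⟩, hCτ⟩
  have hCne : C.Nonempty := by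
    obtain ⟨⟨u, v⟩, huv⟩ := hE
    exact (hC huv).elim (⟨u, ·⟩) (⟨v, ·⟩)
  obtain ⟨A, hA, ⟨a₀, ha₀⟩, ⟨b₀, hb₀⟩⟩ := exists_isClosedIn_of_not_connected hCne hconn
  obtain ⟨a, ha, x, hx, b, hb, hax, hxb⟩ := hA.exists_adj_adj hH hC ha₀ hb₀
  obtain ⟨z, haz, hxz, hbz⟩ := exists_adj_not_adj_of_maximal hc4 hC hmax hA ha hx hb hax hxb
  obtain ⟨w, hbw, hxw, haw⟩ := exists_adj_not_adj_of_maximal hc4 hC hmax hA.diff hb hx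
    ⟨hA.1 ha, fun h => h.2 ha⟩ hxb.symm hax.symm
  exact (nonempty_pathGraph_five_or_cycleGraph_five_embedding haz hax hxb hbw hxz hbz
    (fun h => hb.2 (hA.2 ha hb.1 h)) haw hxw).elim (fun ⟨f⟩ => h5.false f) (fun ⟨f⟩ => hc5.false f)

theorem tauc_eq_tau_of_hfree (hH : H.Connected) (hE : H.edgeSet.Nonempty)
    (h5 : HFree (pathGraph 5) H) (hc5 : HFree (cycleGraph 5) H)
    (hc4 : HFree (cycleGraph 4) H) :
    tauc H = tau H := by
  obtain ⟨C, hC, hCτ⟩ := exists_isConnectedVertexCover_ncard_eq_tau hH hE h5 hc5 hc4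
  exact le_antisymm (hCτ ▸ tauc_le_ncard hC) (tau_le_tauc ⟨C, hC⟩)

end Structure

end

/-- The following are equivalent: (i) every connected induced subgraph `H` of `G` with
at least one edge satisfies `τ_c(H) = τ(H)`; (ii) `G` is `(P₅, C₅, C₄)`-free;
(iii) `G` is chordal and `P₅`-free. -/
theorem poc_perfect_characterization {V : Type} [Fintype V] (G : SimpleGraph V) :
    ((∀ S : Set V, (G.induce S).Connected → (G.induce S).edgeSet.Nonempty →
        tauc (G.induce S) = tau (G.induce S)) ↔
      (HFree (SimpleGraph.pathGraph 5) G ∧ HFree (SimpleGraph.cycleGraph 5) G ∧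
        HFree (SimpleGraph.cycleGraph 4) G)) ∧
    ((HFree (SimpleGraph.pathGraph 5) G ∧ HFree (SimpleGraph.cycleGraph 5) G ∧
        HFree (SimpleGraph.cycleGraph 4) G) ↔
      (Chordal G ∧ HFree (SimpleGraph.pathGraph 5) G)) := by
  refine ⟨⟨fun h => ⟨?_, ?_, ?_⟩, fun ⟨h5, hc5, hc4⟩ S hS hSe =>
    tauc_eq_tau_of_hfree hS hSe (h5.induce S) (hc5.induce S) (hc4.induce S)⟩,
    fun ⟨h5, hc5, hc4⟩ => ⟨(chordal_iff_of_hfree_pathGraph h5).2 ⟨hc5, hc4⟩, h5⟩,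
    fun ⟨hch, h5⟩ => ⟨h5, (chordal_iff_of_hfree_pathGraph h5).1 hch⟩⟩
  · exact hfree_of_tau_lt_tauc (pathGraph_connected 4) ⟨s(0, 1), by simp [pathGraph_adj]⟩
      tau_lt_tauc_pathGraph_five h
  · exact hfree_of_tau_lt_tauc cycleGraph_connected ⟨s(0, 1), by decide⟩
      tau_lt_tauc_cycleGraph_five h
  · exact hfree_of_tau_lt_tauc cycleGraph_connected ⟨s(0, 1), by decide⟩
      tau_lt_tauc_cycleGraph_four h
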